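/- Let 1 ≤ p < ∞. For all real numbers α, c ≥ 1 and every bounded linear operator T : X → Y between real Banach spaces one has π_{p,1}^{⌊cα⌋}(T) ≤ (4c)^{1/p} · π_{p,1}^{⌊α⌋}(T), where ⌊·⌋ denotes the integer part. -/

import Mathlib

open scoped ENNReal NNReal BigOperators

noncomputable section

/-- The `ℓ_p`-sum `(∑ i, f i ^ p) ^ (1/p)` of a finite family in `ℝ≥0∞`,
with the usual sup-modification for `p = ∞`. -/
def eSum (p : ℝ≥0∞) {ι : Type*} [Fintype ι] (f : ι → ℝ≥0∞) : ℝ≥0∞ :=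
  if p = ∞ then ⨆ i, f i else (∑ i, f i ^ p.toReal) ^ (1 / p.toReal)

/-- The weak `ℓ_q`-norm of a finite family of vectors:
`sup { (∑ k |⟨x_k, x*⟩|^q)^(1/q) : x* in the unit ball of the dual }`. -/
def weakLq (q : ℝ≥0∞) {X : Type*} [NormedAddCommGroup X] [NormedSpace ℝ X]
    {n : ℕ} (x : Fin n → X) : ℝ≥0∞ :=
  ⨆ f : {f : X →L[ℝ] ℝ // ‖f‖ ≤ 1}, eSum q fun k => ENNReal.ofReal |f.1 (x k)|

/-- The `(p,q)`-summing norm of `T` with respect to `n` vectors. -/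
def piN (p q : ℝ≥0∞) {X Y : Type*} [NormedAddCommGroup X] [NormedSpace ℝ X]
    [NormedAddCommGroup Y] [NormedSpace ℝ Y] (n : ℕ) (T : X →L[ℝ] Y) : ℝ≥0∞ :=
  ⨆ x : {x : Fin n → X // weakLq q x ≤ 1}, eSum p fun k => ENNReal.ofReal ‖T (x.1 k)‖

/-- The `(p,q)`-summing norm of `T`. -/
def piPQ (p q : ℝ≥0∞) {X Y : Type*} [NormedAddCommGroup X] [NormedSpace ℝ X]
    [NormedAddCommGroup Y] [NormedSpace ℝ Y] (T : X →L[ℝ] Y) : ℝ≥0∞ :=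
  ⨆ n : ℕ, piN p q n T

/-- `T` has rank at most `n`: its range is a finite-dimensional subspace of
dimension at most `n`. -/
def RankLE {X Y : Type*} [NormedAddCommGroup X] [NormedSpace ℝ X]
    [NormedAddCommGroup Y] [NormedSpace ℝ Y] (T : X →L[ℝ] Y) (n : ℕ) : Prop :=
  FiniteDimensional ℝ (LinearMap.range (T : X →ₗ[ℝ] Y)) ∧
    Module.finrank ℝ (LinearMap.range (T : X →ₗ[ℝ] Y)) ≤ n

/-- The average of `‖∑ k, ε k • x k‖²` over all `2^n` sign choices `ε ∈ {-1,1}^n`. -/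
def radAvg {X : Type*} [NormedAddCommGroup X] [NormedSpace ℝ X] {n : ℕ}
    (x : Fin n → X) : ℝ :=
  (∑ ε : Fin n → Bool, ‖∑ k, (if ε k then (1 : ℝ) else -1) • x k‖ ^ 2) / 2 ^ n

/-- The Rademacher cotype `q` constant of `T` with respect to `n` vectors. -/
def cotypeN (q : ℝ) {X Y : Type*} [NormedAddCommGroup X] [NormedSpace ℝ X]
    [NormedAddCommGroup Y] [NormedSpace ℝ Y] (n : ℕ) (T : X →L[ℝ] Y) : ℝ≥0∞ :=
  ⨆ x : {x : Fin n → X // Real.sqrt (radAvg x) ≤ 1},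
    (∑ k, ENNReal.ofReal ‖T (x.1 k)‖ ^ q) ^ (1 / q)

/-- The Rademacher cotype `q` constant of `T`. -/
def cotype (q : ℝ) {X Y : Type*} [NormedAddCommGroup X] [NormedSpace ℝ X]
    [NormedAddCommGroup Y] [NormedSpace ℝ Y] (T : X →L[ℝ] Y) : ℝ≥0∞ :=
  ⨆ n : ℕ, cotypeN q n T

/-!
Split `⌊cα⌋` vectors, padded with zeros, into `m = ⌈2c⌉` consecutive blocks of `⌊α⌋`
vectors. Each block has weak `ℓ₁`-norm at most that of the whole family, so its `ℓ_p`-sum of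
images is at most `π_{p,1}^{⌊α⌋}(T)`; adding the `p`-th powers over the blocks gives the factor
`m^{1/p}`, and `⌈2c⌉ ≤ 4c` because `c ≥ 1`, while `cα ≤ ⌈2c⌉⌊α⌋` because
`α < ⌊α⌋ + 1 ≤ 2⌊α⌋`.
-/

open Function

section eSum

variable {ι κ : Type*} [Fintype ι] [Fintype κ] {p : ℝ≥0∞}

lemma eSum_comp_le {e : ι → κ} (he : Injective e) (g : κ → ℝ≥0∞) :
    eSum p (g ∘ e) ≤ eSum p g := by
  unfold eSum
  split_ifs
  · exact iSup_comp_le g e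
  · refine ENNReal.rpow_le_rpow ?_ (by positivity)
    calc ∑ i, g (e i) ^ p.toReal = ∑ k ∈ Finset.univ.map ⟨e, he⟩, g k ^ p.toReal :=
          (Finset.sum_map Finset.univ ⟨e, he⟩ fun k => g k ^ p.toReal).symm
      _ ≤ ∑ k, g k ^ p.toReal := Finset.sum_le_sum_of_subset (Finset.subset_univ _)

lemma eSum_comp_eq_of_eq_zero (hp : p ≠ 0) {e : ι → κ} (he : Injective e) {g : κ → ℝ≥0∞}
    (hg : ∀ k ∉ Set.range e, g k = 0) :
    eSum p (g ∘ e) = eSum p g := by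
  refine le_antisymm (eSum_comp_le he g) ?_
  unfold eSum
  split_ifs with htop
  · refine iSup_le fun k => ?_
    by_cases hk : k ∈ Set.range e
    · obtain ⟨i, rfl⟩ := hk
      exact le_iSup (g ∘ e) i
    · simp [hg k hk]
  · refine le_of_eq (congrArg (· ^ (1 / p.toReal)) ?_)
    refine (Fintype.sum_of_injective e he _ _ (fun k hk => ?_) fun _ => rfl).symm
    rw [hg k hk, ENNReal.zero_rpow_of_pos (ENNReal.toReal_pos hp htop)]

lemma eSum_rpow_toReal (hp : p ≠ 0) (hp' : p ≠ ∞) (g : ι → ℝ≥0∞) :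
    eSum p g ^ p.toReal = ∑ i, g i ^ p.toReal := by
  rw [eSum, if_neg hp', one_div, ENNReal.rpow_inv_rpow (ENNReal.toReal_pos hp hp').ne']

lemma eSum_le_card_rpow_mul (hp : p ≠ 0) (hp' : p ≠ ∞) {g : ι × κ → ℝ≥0∞} {A : ℝ≥0∞}
    (hA : ∀ i, eSum p (fun k => g (i, k)) ≤ A) :
    eSum p g ≤ (Fintype.card ι : ℝ≥0∞) ^ (1 / p.toReal) * A := by
  have hr : 0 < p.toReal := ENNReal.toReal_pos hp hp'
  have hsum : eSum p g ^ p.toReal ≤ Fintype.card ι * A ^ p.toReal :=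
    calc eSum p g ^ p.toReal = ∑ i, eSum p (fun k => g (i, k)) ^ p.toReal := by
          simp only [eSum_rpow_toReal hp hp', Fintype.sum_prod_type]
      _ ≤ ∑ _i : ι, A ^ p.toReal :=
          Finset.sum_le_sum fun i _ => ENNReal.rpow_le_rpow (hA i) hr.le
      _ = Fintype.card ι * A ^ p.toReal := by simp
  calc eSum p g ≤ (Fintype.card ι * A ^ p.toReal) ^ (1 / p.toReal) := by
        rwa [one_div, ENNReal.le_rpow_inv_iff hr]
    _ = (Fintype.card ι : ℝ≥0∞) ^ (1 / p.toReal) * A := by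
        rw [ENNReal.mul_rpow_of_nonneg _ _ (by positivity), one_div,
          ENNReal.rpow_rpow_inv hr.ne']

end eSum

section extendZero

variable {X : Type*} [Zero X] {n N : ℕ} {e : Fin n → Fin N}

lemma eSum_extend_zero {p : ℝ≥0∞} (hp : p ≠ 0) (he : Injective e) (x : Fin n → X)
    {F : X → ℝ≥0∞} (hF : F 0 = 0) :
    eSum p (fun k => F (extend e x 0 k)) = eSum p (fun i => F (x i)) := by
  rw [← eSum_comp_eq_of_eq_zero hp he fun k hk => by
    rw [extend_apply' _ _ _ hk, Pi.zero_apply, hF]]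
  simp only [comp_def, he.extend_apply]

end extendZero

section summingNorms

variable {X Y : Type*} [NormedAddCommGroup X] [NormedSpace ℝ X]
  [NormedAddCommGroup Y] [NormedSpace ℝ Y] {p q : ℝ≥0∞} {n N : ℕ}

lemma weakLq_comp_le {e : Fin n → Fin N} (he : Injective e) (x : Fin N → X) :
    weakLq q (x ∘ e) ≤ weakLq q x :=
  iSup_mono fun f => eSum_comp_le he fun k => ENNReal.ofReal |f.1 (x k)|

lemma weakLq_extend_zero (hq : q ≠ 0) {e : Fin n → Fin N} (he : Injective e) (x : Fin n → X) :
    weakLq q (extend e x 0) = weakLq q x :=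
  iSup_congr fun f => eSum_extend_zero hq he x (F := fun v => ENNReal.ofReal |f.1 v|) (by simp)

lemma piN_mono (hp : p ≠ 0) (hq : q ≠ 0) (h : n ≤ N) (T : X →L[ℝ] Y) :
    piN p q n T ≤ piN p q N T := by
  refine iSup_le fun x => ?_
  have he := Fin.castLE_injective h
  refine le_iSup_of_le ⟨extend (Fin.castLE h) x.1 0,
    (weakLq_extend_zero hq he x.1).trans_le x.2⟩ ?_
  exact (eSum_extend_zero hp he x.1 (F := fun v => ENNReal.ofReal ‖T v‖) (by simp)).ge

lemma piN_mul_le (hp : p ≠ 0) (hp' : p ≠ ∞) (m N : ℕ) (T : X →L[ℝ] Y) :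
    piN p q (m * N) T ≤ (m : ℝ≥0∞) ^ (1 / p.toReal) * piN p q N T := by
  refine iSup_le fun x => ?_
  let e : Fin m × Fin N ≃ Fin (m * N) := finProdFinEquiv
  rw [← eSum_comp_eq_of_eq_zero hp e.injective (by simp)]
  refine (eSum_le_card_rpow_mul hp hp' fun i => ?_).trans_eq (by rw [Fintype.card_fin])
  have hblock : Injective fun k => e (i, k) := e.injective.comp (Prod.mk_right_injective i)
  exact le_iSup_of_le ⟨x.1 ∘ fun k => e (i, k), (weakLq_comp_le hblock x.1).trans x.2⟩ le_rfl

end summingNorms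

lemma floor_mul_le_ceil_two_mul_mul_floor {α c : ℝ} (hα : 1 ≤ α) (hc : 0 ≤ c) :
    ⌊c * α⌋₊ ≤ ⌈2 * c⌉₊ * ⌊α⌋₊ := by
  have hN : (1 : ℝ) ≤ ⌊α⌋₊ := by exact_mod_cast Nat.le_floor (by exact_mod_cast hα)
  have hα2 : α ≤ 2 * ⌊α⌋₊ := by linarith [Nat.lt_floor_add_one α]
  have hm : 2 * c ≤ ⌈2 * c⌉₊ := Nat.le_ceil _
  have : (⌊c * α⌋₊ : ℝ) ≤ ⌈2 * c⌉₊ * ⌊α⌋₊ :=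
    calc (⌊c * α⌋₊ : ℝ) ≤ c * α := Nat.floor_le (by positivity)
      _ ≤ c * (2 * ⌊α⌋₊) := by gcongr
      _ = 2 * c * ⌊α⌋₊ := by ring
      _ ≤ ⌈2 * c⌉₊ * ⌊α⌋₊ := by gcongr
  exact_mod_cast this

theorem statement11_general (p : ℝ) (hp1 : 1 ≤ p) (α c : ℝ) (hα : 1 ≤ α) (hc : 1 ≤ c)
    (X Y : Type*) [NormedAddCommGroup X] [NormedSpace ℝ X]
    [NormedAddCommGroup Y] [NormedSpace ℝ Y]
    (T : X →L[ℝ] Y) :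
    piN (ENNReal.ofReal p) 1 (⌊c * α⌋₊) T ≤
      ENNReal.ofReal ((4 * c) ^ (1 / p)) * piN (ENNReal.ofReal p) 1 (⌊α⌋₊) T := by
  have hp0 : ENNReal.ofReal p ≠ 0 := by
    rw [Ne, ENNReal.ofReal_eq_zero]; linarith
  have hpReal : (ENNReal.ofReal p).toReal = p := ENNReal.toReal_ofReal (by linarith)
  have hm : (⌈2 * c⌉₊ : ℝ≥0∞) ^ (1 / p) ≤ ENNReal.ofReal ((4 * c) ^ (1 / p)) := by
    rw [← ENNReal.ofReal_rpow_of_pos (by linarith), ← ENNReal.ofReal_natCast]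
    refine ENNReal.rpow_le_rpow (ENNReal.ofReal_le_ofReal ?_) (by positivity)
    linarith [Nat.ceil_lt_add_one (by linarith : (0 : ℝ) ≤ 2 * c)]
  calc piN (ENNReal.ofReal p) 1 (⌊c * α⌋₊) T
      ≤ piN (ENNReal.ofReal p) 1 (⌈2 * c⌉₊ * ⌊α⌋₊) T :=
        piN_mono hp0 one_ne_zero (floor_mul_le_ceil_two_mul_mul_floor hα (by linarith)) T
    _ ≤ (⌈2 * c⌉₊ : ℝ≥0∞) ^ (1 / p) * piN (ENNReal.ofReal p) 1 ⌊α⌋₊ T := by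
        simpa only [hpReal] using piN_mul_le hp0 ENNReal.ofReal_ne_top _ _ T
    _ ≤ ENNReal.ofReal ((4 * c) ^ (1 / p)) * piN (ENNReal.ofReal p) 1 ⌊α⌋₊ T := by
        gcongr

/-- for `1 ≤ p < ∞` and reals `α, c ≥ 1`,
`π_{p,1}^{⌊cα⌋}(T) ≤ (4c)^{1/p} π_{p,1}^{⌊α⌋}(T)`. -/
theorem statement11 (p : ℝ) (hp1 : 1 ≤ p) (α c : ℝ) (hα : 1 ≤ α) (hc : 1 ≤ c)
    (X Y : Type*) [NormedAddCommGroup X] [NormedSpace ℝ X] [CompleteSpace X]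
    [NormedAddCommGroup Y] [NormedSpace ℝ Y] [CompleteSpace Y]
    (T : X →L[ℝ] Y) :
    piN (ENNReal.ofReal p) 1 (⌊c * α⌋₊) T ≤
      ENNReal.ofReal ((4 * c) ^ (1 / p)) * piN (ENNReal.ofReal p) 1 (⌊α⌋₊) T :=
  statement11_general p hp1 α c hα hc X Y T

end
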